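/- For all integers 0 ≤ k ≤ j, the following identity holds in ℚ(q): ∑_{h=0}^{k} (−q)^h q^{h² + 2h(j−k)} [j−h; k−h]_+ [j; h]_+ = (q^{2+2j−2k}; q²)_k [j; k]_+. (This is the product form of the rescaled right twist rule applied to the basis webs OP[j,k] and RI[j,k].) -/

import Mathlib

/-! The identity reduces to the q-binomial theorem
`∑ₕ (-x)ʰ q^{h(h-1)} [k; h]₊ = (x; q²)_k` at `x = q^{2+2(j-k)}`, because the subset-of-a-subset
identity `[j-h; k-h]₊ [j; h]₊ = [j; k]₊ [k; h]₊` pulls the factor `[j; k]₊` out of the sum.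
The q-binomial theorem itself follows by induction on `k` from the q-Pascal rule. -/

noncomputable section

open Finset

/-- The field `ℚ(q)` of rational functions in one variable. -/
abbrev F : Type := RatFunc ℚ

/-- The variable `q`. -/
def q : F := RatFunc.X

/-- The q-Pochhammer symbol `(x; y)_n = ∏_{j=0}^{n-1} (1 - x yʲ)`. -/
def qPoch (x y : F) (n : ℕ) : F := ∏ i ∈ Finset.range n, (1 - x * y ^ i)

/-- `(q²;q²)_m = ∏_{i=1}^{m} (1 - q^{2i})`. -/
def qp (m : ℕ) : F := qPoch (q ^ 2) (q ^ 2) m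

/-- The positive quantum binomial coefficient `[N; k]₊`. -/
def qbin (N k : ℕ) : F := qp N / (qp k * qp (N - k))

lemma q_pow_ne_one {n : ℕ} (hn : n ≠ 0) : q ^ n ≠ 1 := by
  intro h
  have hX : (Polynomial.X : Polynomial ℚ) ^ n = 1 := by
    apply RatFunc.algebraMap_injective ℚ
    simpa [q, RatFunc.algebraMap_X, map_pow] using h
  simpa [hn] using congrArg Polynomial.natDegree hX

lemma one_sub_q_pow_ne_zero {n : ℕ} (hn : n ≠ 0) : (1 : F) - q ^ n ≠ 0 :=
  sub_ne_zero.2 (q_pow_ne_one hn).symm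

lemma qPoch_succ (x y : F) (n : ℕ) : qPoch x y (n + 1) = qPoch x y n * (1 - x * y ^ n) :=
  prod_range_succ _ n

@[simp]
lemma qp_zero : qp 0 = 1 := by simp [qp, qPoch]

lemma qp_succ (m : ℕ) : qp (m + 1) = qp m * (1 - q ^ (2 * m + 2)) := by
  rw [qp, qp, qPoch_succ, ← pow_mul, ← pow_add]
  ring_nf

lemma qp_ne_zero (m : ℕ) : qp m ≠ 0 := by
  induction m with
  | zero => simp
  | succ m ih => rw [qp_succ]; exact mul_ne_zero ih (one_sub_q_pow_ne_zero (by omega))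

@[simp]
lemma qbin_zero_right (N : ℕ) : qbin N 0 = 1 := by
  simp [qbin, qp_ne_zero]

@[simp]
lemma qbin_self (N : ℕ) : qbin N N = 1 := by
  simp [qbin, qp_ne_zero]

/-- The analogue of `Nat.choose_mul`. -/
lemma qbin_mul {n k s : ℕ} (hkn : k ≤ n) (hsk : s ≤ k) :
    qbin n k * qbin k s = qbin n s * qbin (n - s) (k - s) := by
  obtain ⟨a, rfl⟩ : ∃ a, k = s + a := ⟨k - s, by omega⟩
  obtain ⟨b, rfl⟩ : ∃ b, n = s + a + b := ⟨n - (s + a), by omega⟩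
  simp only [qbin, show s + a + b - (s + a) = b by omega, show s + a - s = a by omega,
    show s + a + b - s = a + b by omega, show a + b - a = b by omega]
  field_simp [qp_ne_zero]

/-- `[N; k]₊` extended by zero to `k > N`, where the formula defining `qbin` does not vanish. -/
def qchoose (N k : ℕ) : F := if k ≤ N then qbin N k else 0

lemma qchoose_of_le {N k : ℕ} (h : k ≤ N) : qchoose N k = qbin N k := if_pos h

lemma qchoose_of_lt {N k : ℕ} (h : N < k) : qchoose N k = 0 := if_neg (by omega)

@[simp]
lemma qchoose_zero_right (N : ℕ) : qchoose N 0 = 1 := by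
  simp [qchoose_of_le (Nat.zero_le N)]

lemma qchoose_succ_succ (N h : ℕ) :
    qchoose (N + 1) (h + 1) = qchoose N (h + 1) + q ^ (2 * (N - h)) * qchoose N h := by
  rcases lt_trichotomy h N with hlt | rfl | hgt
  · obtain ⟨d, rfl⟩ : ∃ d, N = h + d + 1 := ⟨N - h - 1, by omega⟩
    rw [qchoose_of_le (by omega), qchoose_of_le (by omega), qchoose_of_le (by omega)]
    simp only [qbin, show h + d + 1 + 1 - (h + 1) = d + 1 by omega,
      show h + d + 1 - (h + 1) = d by omega, show h + d + 1 - h = d + 1 by omega,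
      qp_succ (h + d + 1), qp_succ d, qp_succ h]
    have := one_sub_q_pow_ne_zero (n := 2 * d + 2) (by omega)
    have := one_sub_q_pow_ne_zero (n := 2 * h + 2) (by omega)
    field_simp [qp_ne_zero]
    ring
  · simp [qchoose_of_le, qchoose_of_lt]
  · simp [qchoose_of_lt, hgt, Nat.lt_succ_of_lt hgt]

theorem sum_qchoose_eq_qPoch (x : F) (k : ℕ) :
    ∑ h ∈ range (k + 1), (-x) ^ h * q ^ (h * (h - 1)) * qchoose k h = qPoch x (q ^ 2) k := by
  induction k with
  | zero => simp [qPoch]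
  | succ k ih =>
    set c : ℕ → F := fun h => (-x) ^ h * q ^ (h * (h - 1)) with hc
    have hshift : ∀ h ∈ range (k + 1), c (h + 1) * q ^ (2 * (k - h)) = -(x * (q ^ 2) ^ k) * c h := by
      intro h hh
      have hle : h ≤ k := Nat.lt_succ_iff.1 (mem_range.1 hh)
      obtain ⟨d, rfl⟩ : ∃ d, k = h + d := ⟨k - h, by omega⟩
      rcases h with _ | h
      · simp only [hc, Nat.sub_zero]
        ring
      · simp only [hc, Nat.add_sub_cancel, show h + 1 + d - (h + 1) = d by omega]
        ring
    have htop : c (k + 1) * qchoose k (k + 1) = 0 := by simp [qchoose_of_lt]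
    have hlower : ∑ h ∈ range (k + 1), c (h + 1) * qchoose k (h + 1)
        = ∑ h ∈ range (k + 1), c h * qchoose k h - 1 := by
      have e := sum_range_succ' (fun h => c h * qchoose k h) (k + 1)
      rw [sum_range_succ, htop, add_zero] at e
      have hc0 : c 0 * qchoose k 0 = 1 := by simp [hc]
      linear_combination -e - hc0
    have hmiddle : ∑ h ∈ range (k + 1), c (h + 1) * q ^ (2 * (k - h)) * qchoose k h
        = -(x * (q ^ 2) ^ k) * ∑ h ∈ range (k + 1), c h * qchoose k h := by
      rw [mul_sum]
      exact sum_congr rfl fun h hh => by rw [hshift h hh, mul_assoc]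
    calc ∑ h ∈ range (k + 1 + 1), c h * qchoose (k + 1) h
        = ∑ h ∈ range (k + 1), c (h + 1) * qchoose k (h + 1)
            + ∑ h ∈ range (k + 1), c (h + 1) * q ^ (2 * (k - h)) * qchoose k h + 1 := by
          rw [sum_range_succ']
          simp only [qchoose_succ_succ, mul_add, sum_add_distrib, mul_assoc]
          simp [hc]
      _ = (∑ h ∈ range (k + 1), c h * qchoose k h) * (1 - x * (q ^ 2) ^ k) := by
          rw [hlower, hmiddle]
          ring
      _ = qPoch x (q ^ 2) (k + 1) := by rw [ih, qPoch_succ]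

/-- Product form of the rescaled right twist rule on `OP[j,k]` and `RI[j,k]`:
`∑_{h=0}^{k} (−q)^h q^{h²+2h(j−k)} [j−h;k−h]₊ [j;h]₊ = (q^{2+2j−2k};q²)_k [j;k]₊`. -/
theorem product_form_R_OP_RI (j k : ℕ) (hk : k ≤ j) :
    ∑ h ∈ Finset.range (k + 1),
      (-q) ^ h * q ^ (h ^ 2 + 2 * h * (j - k)) * qbin (j - h) (k - h) * qbin j h =
      qPoch (q ^ (2 + 2 * (j - k))) (q ^ 2) k * qbin j k := by
  have hterm : ∀ h ∈ range (k + 1),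
      (-q) ^ h * q ^ (h ^ 2 + 2 * h * (j - k)) * qbin (j - h) (k - h) * qbin j h =
        qbin j k * ((-q ^ (2 + 2 * (j - k))) ^ h * q ^ (h * (h - 1)) * qchoose k h) := by
    intro h hh
    have hhk : h ≤ k := Nat.lt_succ_iff.1 (mem_range.1 hh)
    rw [qchoose_of_le hhk, mul_assoc, mul_comm (qbin (j - h) _), ← qbin_mul hk hhk]
    rcases h with _ | h
    · simp
    · simp only [Nat.add_sub_cancel]
      ring
  rw [sum_congr rfl hterm, ← mul_sum, sum_qchoose_eq_qPoch, mul_comm]
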